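/- arXiv:2601.08612 — 3 statements merged into one kernel-verified Lean document; each statement's English description precedes it below -/
import Mathlib

section
/- Let p be a prime and let Ω₂ = 𝔽_p[[T,U]]. For a, b ∈ ℤ_p not both divisible by p, let Υ_{a,b} = (1+T)^a(1+U)^b − 1 ∈ Ω₂, where (1+T)^a denotes the binomial power series. If (a,b) and (c,d) represent distinct classes in ℙ¹(ℤ_p) (i.e., ad − bc is nonzero, equivalently there is no unit t ∈ ℤ_p^× with (a,b) = (tc,td)), then Υ_{a,b} and Υ_{c,d} are relatively prime elements of the unique factorization domain Ω₂. -/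
/-!
Let `z` divide `Υ_{a,b}` and `Υ_{c,d}`, let `p ^ v` be the `p`-part of `ad - bc` and
`J = (z) + (T ^ p ^ (v+1), U ^ p ^ (v+1))`. Since
`Υ_{x+x',y+y'} = Υ_{x,y} Υ_{x',y'} + Υ_{x,y} + Υ_{x',y'}`, the pairs `(x, y)` with `Υ_{x,y} ∈ J`
form an additive subgroup of `ℤ_p²`. By Frobenius, `(1+T) ^ (p ^ K * s) ≡ 1 mod T ^ p ^ K`, so
this subgroup contains `p ^ (v+1) ℤ_p²`; as `ℕ` is dense in `ℤ_p` it is then a `ℤ_p`-submodule.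
It contains `(a, b)` and `(c, d)`, hence (via the adjugate) `(p ^ v, 0)` and `(0, p ^ v)`:
`T ^ p ^ v` and `U ^ p ^ v` lie in `(z) + (T ^ p ^ (v+1), U ^ p ^ (v+1))`, and Nakayama's lemma
puts them in `(z)`. As `T` is prime and does not divide `U ^ p ^ v`, `z` is a unit.
-/

open PowerSeries

/-- `Ω₂ = 𝔽_p[[T,U]]`, realized as `(𝔽_p[[U]])[[T]]` with `T` the outer variable. -/
abbrev Omega2 (p : ℕ) [Fact p.Prime] : Type := PowerSeries (PowerSeries (ZMod p))

/-- The binomial power series `(1+T)^a ∈ 𝔽_p[[T,U]]` for `a ∈ ℤ_p`, with coefficients the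
binomial coefficients `C(a,n) ∈ ℤ_p` reduced mod `p`. -/
noncomputable def onePlusTPow (p : ℕ) [Fact p.Prime] (a : ℤ_[p]) : Omega2 p :=
  PowerSeries.mk fun n => PowerSeries.C (R := ZMod p) (PadicInt.toZMod (Ring.choose a n))

/-- The binomial power series `(1+U)^b ∈ 𝔽_p[[T,U]]` for `b ∈ ℤ_p`. -/
noncomputable def onePlusUPow (p : ℕ) [Fact p.Prime] (b : ℤ_[p]) : Omega2 p :=
  PowerSeries.C (R := PowerSeries (ZMod p))
    (PowerSeries.mk fun n => PadicInt.toZMod (Ring.choose b n))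

/-- `Υ_{a,b} = (1+T)^a (1+U)^b - 1 ∈ 𝔽_p[[T,U]]`. -/
noncomputable def UpsilonBar (p : ℕ) [Fact p.Prime] (a b : ℤ_[p]) : Omega2 p :=
  onePlusTPow p a * onePlusUPow p b - 1

theorem Ideal.span_pair_pow_le_of_le_sup {R : Type*} [CommRing R] {I : Ideal R} {x y : R}
    (hx : x ∈ Ideal.jacobson ⊥) (hy : y ∈ Ideal.jacobson ⊥) {n m : ℕ} (hnm : n < m)
    (h : Ideal.span {x ^ n, y ^ n} ≤ I ⊔ Ideal.span {x ^ m, y ^ m}) :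
    Ideal.span {x ^ n, y ^ n} ≤ I := by
  refine Submodule.le_of_le_smul_of_le_jacobson_bot (I := Ideal.span {x, y})
    (Submodule.fg_span (Set.toFinite _)) ?_ (h.trans (sup_le_sup_left ?_ _))
  · rw [Ideal.span_le, Set.insert_subset_iff, Set.singleton_subset_iff]
    exact ⟨hx, hy⟩
  · obtain ⟨k, rfl⟩ := Nat.exists_eq_add_of_lt hnm
    rw [Ideal.span_le, Set.insert_subset_iff, Set.singleton_subset_iff, smul_eq_mul]
    constructor
    · rw [show x ^ (n + k + 1) = (x * x ^ k) * x ^ n by ring]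
      exact Ideal.mul_mem_mul (Ideal.mul_mem_right _ _ (Ideal.subset_span (by simp)))
        (Ideal.subset_span (by simp))
    · rw [show y ^ (n + k + 1) = (y * y ^ k) * y ^ n by ring]
      exact Ideal.mul_mem_mul (Ideal.mul_mem_right _ _ (Ideal.subset_span (by simp)))
        (Ideal.subset_span (by simp))

theorem PowerSeries.isUnit_of_dvd_X_pow_of_dvd_C {R : Type*} [CommRing R] [IsDomain R]
    {z : R⟦X⟧} {n : ℕ} {r : R} (hr : r ≠ 0) (hX : z ∣ X ^ n) (hC : z ∣ C r) : IsUnit z := by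
  obtain ⟨i, -, hi⟩ := (dvd_prime_pow X_prime n).1 hX
  rcases i with _ | i
  · simpa using hi.isUnit_iff.2 isUnit_one
  · have : (X : R⟦X⟧) ∣ C r := (dvd_pow_self X i.succ_ne_zero).trans (hi.symm.dvd.trans hC)
    exact absurd (by simpa using X_dvd_iff.1 this) hr

theorem PadicInt.smul_mem_of_pow_smul_mem {p : ℕ} [Fact p.Prime] {M : Type*} [AddCommGroup M]
    [Module ℤ_[p] M] {S : AddSubgroup M} {K : ℕ} (hS : ∀ w, (p : ℤ_[p]) ^ K • w ∈ S)
    (r : ℤ_[p]) {w : M} (hw : w ∈ S) : r • w ∈ S := by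
  -- `r = appr r K + s * p ^ K` with `appr r K ∈ ℕ`
  obtain ⟨s, hs⟩ := Ideal.mem_span_singleton'.1 (PadicInt.appr_spec K r)
  rw [show r = (r.appr K : ℤ_[p]) + (r - r.appr K) by ring, ← hs, add_smul, mul_comm, mul_smul,
    Nat.cast_smul_eq_nsmul]
  exact add_mem (nsmul_mem hw _) (hS _)

theorem Submodule.inl_mem_and_inr_mem_of_det_eq_unit_mul {R : Type*} [CommRing R]
    {M : Submodule R (R × R)} {a b c d r : R} (u : Rˣ) (hdet : a * d - b * c = u * r)
    (hab : (a, b) ∈ M) (hcd : (c, d) ∈ M) : (r, 0) ∈ M ∧ (0, r) ∈ M := by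
  have hr : r = ↑u⁻¹ * (a * d - b * c) := by rw [hdet, ← mul_assoc, Units.inv_mul, one_mul]
  constructor
  · convert M.smul_mem ↑u⁻¹ (M.sub_mem (M.smul_mem d hab) (M.smul_mem b hcd)) using 1
    simp [hr, mul_comm]
  · convert M.smul_mem ↑u⁻¹ (M.sub_mem (M.smul_mem a hcd) (M.smul_mem c hab)) using 1
    simp [hr, mul_comm]

theorem PowerSeries.mem_jacobson_bot_of_constantCoeff_mem {R : Type*} [CommRing R] {f : R⟦X⟧}
    (h : constantCoeff f ∈ Ideal.jacobson ⊥) : f ∈ Ideal.jacobson ⊥ := by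
  rw [Ideal.mem_jacobson_bot] at h ⊢
  intro y
  rw [isUnit_iff_constantCoeff]
  simpa using h (constantCoeff y)

theorem PowerSeries.X_mem_jacobson_bot {R : Type*} [CommRing R] :
    (X : R⟦X⟧) ∈ Ideal.jacobson ⊥ :=
  mem_jacobson_bot_of_constantCoeff_mem (by simp)

section Upsilon

variable (p : ℕ) [Fact p.Prime]

instance : CharP (PowerSeries (ZMod p)) p :=
  charP_of_injective_ringHom (C_injective (R := ZMod p)) p

noncomputable def reducedBinomialSeries (a : ℤ_[p]) : PowerSeries (ZMod p) :=
  PowerSeries.mk fun n => PadicInt.toZMod (Ring.choose a n)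

theorem reducedBinomialSeries_add (a b : ℤ_[p]) :
    reducedBinomialSeries p (a + b) = reducedBinomialSeries p a * reducedBinomialSeries p b := by
  ext n
  simp only [reducedBinomialSeries, coeff_mul, coeff_mk, Ring.add_choose_eq n (Commute.all a b),
    map_sum, map_mul]

theorem reducedBinomialSeries_zero : reducedBinomialSeries p 0 = 1 := by
  ext m
  simp [reducedBinomialSeries, coeff_one, Ring.choose_zero_ite, apply_ite]

theorem reducedBinomialSeries_natCast_mul (n : ℕ) (a : ℤ_[p]) :
    reducedBinomialSeries p (n * a) = reducedBinomialSeries p a ^ n := by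
  induction n with
  | zero => rw [Nat.cast_zero, zero_mul, reducedBinomialSeries_zero, pow_zero]
  | succ n ih => rw [Nat.cast_succ, add_one_mul, reducedBinomialSeries_add, ih, pow_succ]

theorem reducedBinomialSeries_one : reducedBinomialSeries p 1 = 1 + X := by
  ext n
  rw [← Nat.cast_one, reducedBinomialSeries, coeff_mk, Ring.choose_natCast, map_natCast]
  rcases n with _ | _ | n <;> simp [coeff_one, coeff_X, Nat.choose_eq_zero_of_lt]

theorem X_dvd_reducedBinomialSeries_sub_one (a : ℤ_[p]) : X ∣ reducedBinomialSeries p a - 1 := by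
  simp [X_dvd_iff, reducedBinomialSeries]

theorem reducedBinomialSeries_prime_pow (K : ℕ) :
    reducedBinomialSeries p ((p : ℤ_[p]) ^ K) = 1 + X ^ p ^ K := by
  rw [← mul_one ((p : ℤ_[p]) ^ K), ← Nat.cast_pow, reducedBinomialSeries_natCast_mul,
    reducedBinomialSeries_one, add_pow_char_pow, one_pow]

theorem X_pow_dvd_reducedBinomialSeries_prime_pow_mul_sub_one (K : ℕ) (a : ℤ_[p]) :
    X ^ p ^ K ∣ reducedBinomialSeries p ((p : ℤ_[p]) ^ K * a) - 1 := by
  rw [← Nat.cast_pow, reducedBinomialSeries_natCast_mul, ← one_pow (p ^ K), ← sub_pow_char_pow]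
  exact pow_dvd_pow_of_dvd (X_dvd_reducedBinomialSeries_sub_one p a) _

theorem onePlusTPow_eq_map (a : ℤ_[p]) : onePlusTPow p a = map C (reducedBinomialSeries p a) := by
  ext n
  simp [onePlusTPow, reducedBinomialSeries]

theorem onePlusUPow_eq_C (b : ℤ_[p]) : onePlusUPow p b = C (reducedBinomialSeries p b) := rfl

theorem upsilonBar_add (a b c d : ℤ_[p]) :
    UpsilonBar p (a + c) (b + d) =
      UpsilonBar p a b * UpsilonBar p c d + UpsilonBar p a b + UpsilonBar p c d := by
  simp only [UpsilonBar, onePlusTPow_eq_map, onePlusUPow_eq_C, reducedBinomialSeries_add, map_mul]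
  ring

theorem upsilonBar_zero : UpsilonBar p 0 0 = 0 := by
  simp [UpsilonBar, onePlusTPow_eq_map, onePlusUPow_eq_C, reducedBinomialSeries_zero]

theorem upsilonBar_prime_pow_zero (v : ℕ) : UpsilonBar p ((p : ℤ_[p]) ^ v) 0 = X ^ p ^ v := by
  simp [UpsilonBar, onePlusTPow_eq_map, onePlusUPow_eq_C, reducedBinomialSeries_zero,
    reducedBinomialSeries_prime_pow]

theorem upsilonBar_zero_prime_pow (v : ℕ) : UpsilonBar p 0 ((p : ℤ_[p]) ^ v) = C X ^ p ^ v := by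
  simp [UpsilonBar, onePlusTPow_eq_map, onePlusUPow_eq_C, reducedBinomialSeries_zero,
    reducedBinomialSeries_prime_pow]

theorem upsilonBar_prime_pow_mul_mem (K : ℕ) (s t : ℤ_[p]) :
    UpsilonBar p ((p : ℤ_[p]) ^ K * s) ((p : ℤ_[p]) ^ K * t) ∈
      Ideal.span {X ^ p ^ K, C X ^ p ^ K} := by
  have hT : X ^ p ^ K ∣ onePlusTPow p ((p : ℤ_[p]) ^ K * s) - 1 := by
    simpa [onePlusTPow_eq_map] using
      map_dvd (map C) (X_pow_dvd_reducedBinomialSeries_prime_pow_mul_sub_one p K s)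
  have hU : C X ^ p ^ K ∣ onePlusUPow p ((p : ℤ_[p]) ^ K * t) - 1 := by
    simpa [onePlusUPow_eq_C] using
      map_dvd C (X_pow_dvd_reducedBinomialSeries_prime_pow_mul_sub_one p K t)
  rw [UpsilonBar, show ∀ A B : Omega2 p, A * B - 1 = (A - 1) * B + (B - 1) from fun _ _ => by ring]
  exact add_mem (Ideal.mul_mem_right _ _ (Ideal.mem_of_dvd _ hT (Ideal.subset_span (by simp))))
    (Ideal.mem_of_dvd _ hU (Ideal.subset_span (by simp)))

def upsilonSubgroup (J : Ideal (Omega2 p)) : AddSubgroup (ℤ_[p] × ℤ_[p]) where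
  carrier := {w | UpsilonBar p w.1 w.2 ∈ J}
  add_mem' {v w} hv hw := by
    rw [Set.mem_ofPred, Prod.fst_add, Prod.snd_add, upsilonBar_add]
    exact add_mem (add_mem (J.mul_mem_right _ hv) hv) hw
  zero_mem' := by simp [upsilonBar_zero]
  neg_mem' {w} hw := by
    have h := upsilonBar_add p (-w.1) (-w.2) w.1 w.2
    rw [neg_add_cancel, neg_add_cancel, upsilonBar_zero] at h
    rw [Set.mem_ofPred, Prod.fst_neg, Prod.snd_neg,
      show UpsilonBar p (-w.1) (-w.2) = -(UpsilonBar p (-w.1) (-w.2) + 1) * UpsilonBar p w.1 w.2 by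
        linear_combination -h]
    exact J.mul_mem_left _ hw

end Upsilon

theorem stmt_5_general (p : ℕ) [Fact p.Prime] (a b c d : ℤ_[p])
    (hdist : a * d - b * c ≠ 0) :
    IsRelPrime (UpsilonBar p a b) (UpsilonBar p c d) := by
  intro z hza hzc
  set v := (a * d - b * c).valuation
  set J := Ideal.span {z} ⊔ Ideal.span {X ^ p ^ (v + 1), C X ^ p ^ (v + 1)}
  let M : Submodule ℤ_[p] (ℤ_[p] × ℤ_[p]) :=
    { upsilonSubgroup p J with
      smul_mem' := fun r _ => PadicInt.smul_mem_of_pow_smul_mem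
        (fun w => Ideal.mem_sup_right (upsilonBar_prime_pow_mul_mem p (v + 1) w.1 w.2)) r }
  obtain ⟨hT, hU⟩ := M.inl_mem_and_inr_mem_of_det_eq_unit_mul _ (PadicInt.unitCoeff_spec hdist)
    (Ideal.mem_sup_left (Ideal.mem_span_singleton.2 hza) : (a, b) ∈ M)
    (Ideal.mem_sup_left (Ideal.mem_span_singleton.2 hzc) : (c, d) ∈ M)
  have hT' : X ^ p ^ v ∈ J := upsilonBar_prime_pow_zero p v ▸ hT
  have hU' : C X ^ p ^ v ∈ J := upsilonBar_zero_prime_pow p v ▸ hU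
  have hspan : Ideal.span {X ^ p ^ v, C X ^ p ^ v} ≤ Ideal.span {z} :=
    Ideal.span_pair_pow_le_of_le_sup (I := Ideal.span {z}) X_mem_jacobson_bot
      (mem_jacobson_bot_of_constantCoeff_mem (by simpa using X_mem_jacobson_bot))
      (Nat.pow_lt_pow_right (Fact.out : p.Prime).one_lt v.lt_succ_self)
      (by rw [Ideal.span_le, Set.insert_subset_iff, Set.singleton_subset_iff]; exact ⟨hT', hU'⟩)
  have hzT : z ∣ X ^ p ^ v := Ideal.mem_span_singleton.1 (hspan (Ideal.subset_span (by simp)))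
  have hzU : z ∣ C (X ^ p ^ v) := by
    rw [map_pow]
    exact Ideal.mem_span_singleton.1 (hspan (Ideal.subset_span (by simp)))
  exact isUnit_of_dvd_X_pow_of_dvd_C (pow_ne_zero _ X_ne_zero) hzT hzU

/-- If `(a,b)` and `(c,d)` are primitive vectors in `ℤ_p²` representing distinct classes
in `ℙ¹(ℤ_p)` (i.e. `ad - bc ≠ 0`), then `Υ_{a,b}` and `Υ_{c,d}` are relatively prime
elements of the UFD `𝔽_p[[T,U]]`. -/
theorem stmt_5 (p : ℕ) [Fact p.Prime] (a b c d : ℤ_[p])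
    (hab : ¬((p : ℤ_[p]) ∣ a ∧ (p : ℤ_[p]) ∣ b))
    (hcd : ¬((p : ℤ_[p]) ∣ c ∧ (p : ℤ_[p]) ∣ d))
    (hdist : a * d - b * c ≠ 0) :
    IsRelPrime (UpsilonBar p a b) (UpsilonBar p c d) :=
  stmt_5_general p a b c d hdist
end

section
/- Let p be a prime, d ≥ 0, and let φ : (ℚ_p/ℤ_p)^d → (ℚ_p/ℤ_p)^d be an endomorphism of abelian groups with finite kernel. Then φ is surjective. -/
/-!
Let `φ` be an endomorphism with finite kernel `K` of a divisible abelian group `G` in which every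
element lies in a finite subgroup `G[n] = {x | n • x = 0}`, as in `(ℚ_p/ℤ_p)^d` with `n = p^N`.
Given `y`, write `y = |K| • x` and let `n • x = 0`. On the finite group `G[n]`, which `φ` maps to
itself, the cokernel of the restriction has the same order as its kernel, which divides `|K|`;
hence `|K|` kills that cokernel, and `y = |K| • x` lies in the image.
-/

/-- The Prüfer group `ℚ_p/ℤ_p`, as the quotient of the additive group of `ℚ_p` by `ℤ_p`. -/
abbrev PruferGroup (p : ℕ) [Fact p.Prime] : Type :=
  ℚ_[p] ⧸ (PadicInt.subring p).toAddSubgroup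

open Function QuotientAddGroup

namespace AddMonoidHom

theorem card_ker_nsmul_mem_range {A : Type*} [AddCommGroup A] [Finite A] (ψ : A →+ A) (a : A) :
    Nat.card ψ.ker • a ∈ ψ.range := by
  rw [← AddSubgroup.index_range]
  exact ψ.range.nsmul_index_mem a

theorem surjective_of_finite_ker {G : Type*} [AddCommGroup G] (φ : G →+ G) [Finite φ.ker]
    (hdiv : ∀ n : ℕ, n ≠ 0 → Surjective fun g : G => n • g)
    (htors : ∀ g : G, ∃ n : ℕ, n • g = 0 ∧ {x : G | n • x = 0}.Finite) :
    Surjective φ := by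
  intro y
  obtain ⟨x, rfl⟩ := hdiv (Nat.card φ.ker) Nat.card_pos.ne' y
  obtain ⟨n, hx, hfin⟩ := htors x
  let A := (nsmulAddMonoidHom (α := G) n).ker
  have : Finite A := hfin.to_subtype
  let ψ : A →+ A := (φ.domRestrict A).codRestrict A fun a => by
    have ha : n • (a : G) = 0 := a.2
    simp [A, ← map_nsmul, ha]
  have hdvd : Nat.card ψ.ker ∣ Nat.card φ.ker := by
    refine AddSubgroup.card_dvd_of_injective
      ((A.subtype.comp ψ.ker.subtype).codRestrict φ.ker fun a => ?_) fun a b hab => ?_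
    · exact congrArg Subtype.val (mem_ker.mp a.2)
    · exact Subtype.ext (Subtype.ext (congrArg Subtype.val hab :))
  obtain ⟨c, hc⟩ := hdvd
  obtain ⟨a, ha⟩ : Nat.card φ.ker • (⟨x, by simpa [A] using hx⟩ : A) ∈ ψ.range := by
    rw [hc, mul_nsmul]
    exact nsmul_mem (ψ.card_ker_nsmul_mem_range _) c
  exact ⟨a, congrArg Subtype.val ha⟩

end AddMonoidHom

namespace PruferGroup

variable {p : ℕ} [Fact p.Prime]

theorem mk_eq_zero_iff {q : ℚ_[p]} : (mk q : PruferGroup p) = 0 ↔ ‖q‖ ≤ 1 :=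
  eq_zero_iff q

theorem nsmul_surjective {n : ℕ} (hn : n ≠ 0) : Surjective fun x : PruferGroup p => n • x := by
  intro x
  induction x using QuotientAddGroup.induction_on with | H q =>
  refine ⟨mk (q / n), ?_⟩
  simp only [← mk_nsmul, nsmul_eq_mul, mul_div_cancel₀ q (Nat.cast_ne_zero.mpr hn)]

theorem pow_nsmul_mk (N : ℕ) (q : ℚ_[p]) :
    p ^ N • (mk q : PruferGroup p) = mk ((p : ℚ_[p]) ^ N * q) := by
  rw [← mk_nsmul, nsmul_eq_mul]; push_cast; rfl

theorem exists_pow_nsmul_eq_zero (x : PruferGroup p) : ∃ N : ℕ, p ^ N • x = 0 := by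
  induction x using QuotientAddGroup.induction_on with | H q =>
  obtain ⟨N, hN⟩ := pow_unbounded_of_one_lt ‖q‖ (Nat.one_lt_cast.mpr (Fact.out : p.Prime).one_lt)
  refine ⟨N, ?_⟩
  have hp : (0 : ℝ) < p := Nat.cast_pos.mpr (Fact.out : p.Prime).pos
  rw [pow_nsmul_mk, mk_eq_zero_iff, norm_mul, norm_pow, Padic.norm_p, inv_pow,
    inv_mul_le_iff₀ (pow_pos hp N)]
  simpa using hN.le

theorem finite_setOf_pow_nsmul_eq_zero (N : ℕ) :
    {x : PruferGroup p | p ^ N • x = 0}.Finite := by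
  refine ((Set.finite_Iio (p ^ N)).image
    fun k : ℕ => (mk (k / (p : ℚ_[p]) ^ N) : PruferGroup p)).subset fun x hx => ?_
  induction x using QuotientAddGroup.induction_on with | H q =>
  have hz : ‖(p : ℚ_[p]) ^ N * q‖ ≤ 1 := by rwa [← mk_eq_zero_iff, ← pow_nsmul_mk]
  let z : ℤ_[p] := ⟨_, hz⟩
  obtain ⟨c, hc⟩ := Ideal.mem_span_singleton'.mp (PadicInt.appr_spec N z)
  refine ⟨z.appr N, PadicInt.appr_lt z N, eq_iff_sub_mem.mpr ?_⟩
  have hp : (p : ℚ_[p]) ^ N ≠ 0 := by simp [(Fact.out : p.Prime).ne_zero]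
  have : (z.appr N : ℚ_[p]) / p ^ N - q = -c := by
    have := congrArg ((↑) : ℤ_[p] → ℚ_[p]) hc
    push_cast at this
    field_simp
    linear_combination this
  rw [this]
  exact neg_mem c.2

end PruferGroup

theorem Pi.exists_pow_nsmul_eq_zero {ι : Type*} [Finite ι] {G : ι → Type*}
    [∀ i, AddMonoid (G i)] {p : ℕ} (h : ∀ i (x : G i), ∃ N : ℕ, p ^ N • x = 0) (g : ∀ i, G i) :
    ∃ N : ℕ, p ^ N • g = 0 := by
  choose N hN using fun i => h i (g i)
  obtain ⟨M, hM⟩ := (Set.finite_range N).bddAbove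
  refine ⟨M, funext fun i => ?_⟩
  obtain ⟨k, hk⟩ := Nat.exists_eq_add_of_le (hM ⟨i, rfl⟩)
  rw [Pi.smul_apply, hk, pow_add, mul_nsmul, hN i, nsmul_zero, Pi.zero_apply]

theorem Pi.finite_setOf_nsmul_eq_zero {ι : Type*} [Finite ι] {G : ι → Type*}
    [∀ i, AddMonoid (G i)] {n : ℕ} (h : ∀ i, {x : G i | n • x = 0}.Finite) :
    {g : ∀ i, G i | n • g = 0}.Finite :=
  (Set.Finite.pi h).subset fun _ hg i _ => congrFun hg i

/-- Any additive endomorphism of `(ℚ_p/ℤ_p)^d` with finite kernel is surjective. -/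
theorem stmt_7 (p : ℕ) [Fact p.Prime] (d : ℕ)
    (φ : (Fin d → PruferGroup p) →+ (Fin d → PruferGroup p))
    (hker : Finite φ.ker) :
    Function.Surjective φ := by
  refine φ.surjective_of_finite_ker
    (fun n hn => Surjective.piMap fun _ => PruferGroup.nsmul_surjective hn) fun g => ?_
  obtain ⟨N, hN⟩ := Pi.exists_pow_nsmul_eq_zero (fun _ => PruferGroup.exists_pow_nsmul_eq_zero) g
  exact ⟨p ^ N, hN, Pi.finite_setOf_nsmul_eq_zero fun _ =>
    PruferGroup.finite_setOf_pow_nsmul_eq_zero N⟩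
end

section
/- Let R be a unique factorization domain, x ∈ R a prime element, and suppose 0 → M → B → D → 0 is a short exact sequence of R-modules in which B is free and D is torsion-free. Then M/xM is a torsion-free module over the integral domain R/(x). -/
open Pointwise

private lemma free_smul_dvd {R B : Type*} [CommRing R] [IsDomain R] [AddCommGroup B]
    [Module R B] [Module.Free R B] {x a : R} (hx : Prime x) (ha : ¬ x ∣ a) {v z : B}
    (h : a • v = x • z) : ∃ b : B, v = x • b := by
  classical
  set bb := Module.Free.chooseBasis R B with hbb
  have hrepr : ∀ i, a * bb.repr v i = x * bb.repr z i := by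
    intro i
    have := congrArg (fun w => bb.repr w i) h
    simpa using this
  have hdvd : ∀ i, x ∣ bb.repr v i := by
    intro i
    rcases hx.dvd_or_dvd ⟨bb.repr z i, hrepr i⟩ with h' | h'
    · exact absurd h' ha
    · exact h'
  let t : _ → R := fun i => (hdvd i).choose
  have ht : ∀ i, bb.repr v i = x * t i := fun i => (hdvd i).choose_spec
  let w := Finsupp.onFinset (bb.repr v).support t (by
    intro i hi
    simp only [Finsupp.mem_support_iff]
    rw [ht i]
    exact mul_ne_zero hx.ne_zero hi)
  refine ⟨bb.repr.symm w, ?_⟩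
  apply bb.repr.injective
  rw [map_smul, LinearEquiv.apply_symm_apply]
  ext i
  simpa [w, Finsupp.onFinset_apply] using ht i

/-- Let `R` be a UFD, `x ∈ R` a prime element, and `0 → M → B → D → 0` a short exact
sequence of `R`-modules with `B` free and `D` torsion-free.  Then `M/xM` is a
torsion-free module over the domain `R/(x)`. -/
theorem stmt_17 {R : Type*} [CommRing R] [IsDomain R] [UniqueFactorizationMonoid R]
    {x : R} (hx : Prime x)
    {M B D : Type*} [AddCommGroup M] [Module R M] [AddCommGroup B] [Module R B]
    [AddCommGroup D] [Module R D] [Module.Free R B] [NoZeroSMulDivisors R D]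
    (f : M →ₗ[R] B) (g : B →ₗ[R] D)
    (hf : Function.Injective f) (hg : Function.Surjective g)
    (hexact : LinearMap.range f = LinearMap.ker g) :
    ∀ (r : R ⧸ Ideal.span {x})
      (m : M ⧸ (Ideal.span {x} • (⊤ : Submodule R M))),
      r • m = 0 → r = 0 ∨ m = 0 := by
  intro r m hrm
  obtain ⟨a, rfl⟩ := Ideal.Quotient.mk_surjective r
  obtain ⟨y, rfl⟩ := Submodule.Quotient.mk_surjective _ m
  by_cases hax : x ∣ a
  · left
    rw [Ideal.Quotient.eq_zero_iff_mem, Ideal.mem_span_singleton]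
    exact hax
  right
  -- a • y ∈ span{x} • ⊤
  have hmem : a • y ∈ (Ideal.span {x} : Ideal R) • (⊤ : Submodule R M) := by
    rw [← Submodule.Quotient.mk_eq_zero]
    rw [show (Submodule.Quotient.mk (a • y) :
        M ⧸ (Ideal.span {x} • (⊤ : Submodule R M))) =
        (Ideal.Quotient.mk (Ideal.span {x}) a) • Submodule.Quotient.mk y from rfl]
    exact hrm
  rw [Submodule.ideal_span_singleton_smul] at hmem
  obtain ⟨z, -, hz⟩ : ∃ z ∈ (⊤ : Submodule R M), x • z = a • y := by
    have : a • y ∈ (x • (⊤ : Submodule R M) : Set M) := hmem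
    rw [Set.mem_smul_set] at this
    simpa using this
  -- so a • y = x • z
  have hB : a • f y = x • f z := by
    rw [← map_smul, ← map_smul, ← hz]
  obtain ⟨b, hb⟩ := free_smul_dvd hx hax hB
  have hgb : x • g b = 0 := by
    rw [← map_smul, ← hb]
    have : f y ∈ LinearMap.ker g := hexact ▸ LinearMap.mem_range_self f y
    exact this
  have hgb0 : g b = 0 := by
    rcases smul_eq_zero.mp hgb with h | h
    · exact absurd h hx.ne_zero
    · exact h
  obtain ⟨w, hw⟩ : b ∈ LinearMap.range f := hexact ▸ hgb0
  have hyxw : y = x • w := by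
    apply hf
    rw [hb, map_smul, hw]
  rw [Submodule.Quotient.mk_eq_zero, Submodule.ideal_span_singleton_smul]
  exact hyxw ▸ Submodule.smul_mem_pointwise_smul w x ⊤ trivial
end
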